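/- Let (E,ℒ,𝒜) be a weakly left-resolving, normal labelled space and let (α,A,β), (μ,B,ν) ∈ S be nonzero. Then Z_{(α,A,β)} ∩ Z_{(μ,B,ν)} equals: Z_{(μ, r(A,δ)∩B, ν)} if μ = αδ and ν = βδ for some δ ∈ ℒ* with r(A,δ)∩B ≠ ∅; Z_{(α, A∩r(B,δ), β)} if α = μδ and β = νδ for some δ ∈ ℒ* with A∩r(B,δ) ≠ ∅; and ∅ otherwise. -/

import Mathlib

open Classical

universe u v w

/-! ## Words over an alphabet -/

/-- Finite-or-infinite words over the alphabet `A`: `Sum.inl l` is the finite word `l`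
(with `[]` playing the role of the empty word `ω`), and `Sum.inr f` is the infinite word `f`. -/
abbrev Word (A : Type w) := List A ⊕ (ℕ → A)

/-- The length `|α| ∈ ℕ∞` of a word. -/
def wlength {A : Type w} : Word A → ℕ∞ :=
  Sum.elim (fun l => (l.length : ℕ∞)) fun _ => ⊤

/-- The finite prefix `α_{1,n}` of a word `α`. -/
def wprefix {A : Type w} : Word A → ℕ → List A :=
  Sum.elim (fun l n => l.take n) fun f n => List.ofFn fun i : Fin n => f i

/-- Concatenation `αβ` of a finite word `α` with a word `β`. -/
def wappend {A : Type w} (α : List A) : Word A → Word A :=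
  Sum.elim (fun l => Sum.inl (α ++ l)) fun f =>
    Sum.inr fun n => if h : n < α.length then α.get ⟨n, h⟩ else f (n - α.length)

/-- `β` is a beginning (finite prefix) of the word `α`. -/
def WPrefix {A : Type w} (β : List A) : Word A → Prop :=
  Sum.elim (fun l => β <+: l) fun f => β = List.ofFn fun i : Fin β.length => f i

/-! ## Triples -/

/-- Formal triples `(α, X, β)` together with a zero element; the inverse semigroup `S`
of a labelled space consists of such elements. -/
inductive Tr (V : Type u) (A : Type w) where
  | zero : Tr V A
  | mk : List A → Set V → List A → Tr V A

/-- The involution `(α,A,β)* = (β,A,α)` (fixing `0`). -/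
def Tr.tstar {V : Type u} {A : Type w} : Tr V A → Tr V A
  | .zero => .zero
  | .mk α X β => .mk β X α

/-! ## Labelled spaces -/

/-- The data of a labelled space `(E, ℒ, 𝒜)`: a directed graph on nonempty vertex/edge
sets, a surjective labelling map onto the alphabet `A`, and a family `𝒜` of subsets
of the vertex set. -/
structure LblSp (V : Type u) (E : Type v) (A : Type w) where
  src : E → V
  rng : E → V
  lab : E → A
  lab_surj : Function.Surjective lab
  nonempty_V : Nonempty V
  nonempty_E : Nonempty E
  𝒜 : Set (Set V)

namespace LblSp

variable {V : Type u} {Ed : Type v} {A : Type w} (Λ : LblSp V Ed A)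

/-- `α ≠ ω` is the label of some finite path of the graph. -/
def IsPathLabel (α : List A) : Prop :=
  ∃ l : List Ed, l ≠ [] ∧ List.Chain' (fun e f => Λ.rng e = Λ.src f) l ∧ l.map Λ.lab = α

/-- `ℒ^*`: the finite labelled paths, together with the empty word. -/
def LStar : Set (List A) := {α | α = [] ∨ Λ.IsPathLabel α}

/-- `ℒ^∞`: the infinite labelled paths. -/
def LInfty : Set (ℕ → A) :=
  {f | ∃ e : ℕ → Ed, (∀ n, Λ.rng (e n) = Λ.src (e (n + 1))) ∧ ∀ n, Λ.lab (e n) = f n}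

/-- `ℒ^{≤∞} = ℒ^* ∪ ℒ^∞`, as a predicate on `Word A`. -/
def IsWordW : Word A → Prop := Sum.elim (· ∈ Λ.LStar) (· ∈ Λ.LInfty)

/-- The relative range `r(X, α)` (with `r(X, ω) = X`). -/
noncomputable def relRange (X : Set V) (α : List A) : Set V :=
  if α = [] then X
  else {v | ∃ (l : List Ed) (h : l ≠ []), List.Chain' (fun e f => Λ.rng e = Λ.src f) l ∧
        l.map Λ.lab = α ∧ Λ.src (l.head h) ∈ X ∧ Λ.rng (l.getLast h) = v}

/-- The range `r(α) = r(E⁰, α)`. -/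
noncomputable def rangeL (α : List A) : Set V := Λ.relRange Set.univ α

/-- `𝒜^α = {X ∈ 𝒜 : X ⊆ r(α)}`. -/
noncomputable def Aset (α : List A) : Set (Set V) := {X | X ∈ Λ.𝒜 ∧ X ⊆ Λ.rangeL α}

/-- `(E, ℒ, 𝒜)` is a labelled space: `𝒜` is closed under finite intersections and
unions, contains all ranges `r(α)` for `α ∈ ℒ^{≥1}`, and is closed under relative ranges. -/
structure IsLS : Prop where
  inter_mem : ∀ X ∈ Λ.𝒜, ∀ Y ∈ Λ.𝒜, X ∩ Y ∈ Λ.𝒜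
  union_mem : ∀ X ∈ Λ.𝒜, ∀ Y ∈ Λ.𝒜, X ∪ Y ∈ Λ.𝒜
  range_mem : ∀ α ∈ Λ.LStar, α ≠ [] → Λ.rangeL α ∈ Λ.𝒜
  relRange_mem : ∀ X ∈ Λ.𝒜, ∀ α ∈ Λ.LStar, Λ.relRange X α ∈ Λ.𝒜

/-- A weakly left-resolving labelled space. -/
structure IsWLR : Prop where
  toIsLS : Λ.IsLS
  wlr : ∀ X ∈ Λ.𝒜, ∀ Y ∈ Λ.𝒜, ∀ α ∈ Λ.LStar, α ≠ [] →
    Λ.relRange (X ∩ Y) α = Λ.relRange X α ∩ Λ.relRange Y α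

/-- A weakly left-resolving normal labelled space. -/
structure IsNormal : Prop where
  toIsWLR : Λ.IsWLR
  sdiff_mem : ∀ X ∈ Λ.𝒜, ∀ Y ∈ Λ.𝒜, X \ Y ∈ Λ.𝒜

/-! ## The inverse semigroup `S` -/

/-- The underlying set of the inverse semigroup
`S = {(α,A,β) : α, β ∈ ℒ^*, A ∈ 𝒜^α ∩ 𝒜^β, A ≠ ∅} ∪ {0}`. -/
def SSet : Set (Tr V A) :=
  {t | t = Tr.zero ∨ ∃ α X β, t = Tr.mk α X β ∧ α ∈ Λ.LStar ∧ β ∈ Λ.LStar ∧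
    X ∈ Λ.Aset α ∧ X ∈ Λ.Aset β ∧ X.Nonempty}

/-- The semilattice of idempotents `E(S) = {(α,A,α)} ∪ {0}`. -/
def ESet : Set (Tr V A) :=
  {t | t = Tr.zero ∨ ∃ α X, t = Tr.mk α X α ∧ α ∈ Λ.LStar ∧ X ∈ Λ.Aset α ∧ X.Nonempty}

/-- The product of `S`. -/
noncomputable def tmul : Tr V A → Tr V A → Tr V A
  | Tr.zero, _ => Tr.zero
  | Tr.mk _ _ _, Tr.zero => Tr.zero
  | Tr.mk α X β, Tr.mk γ Y δ =>
    if β <+: γ ∧ (Λ.relRange X (γ.drop β.length) ∩ Y).Nonempty then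
      Tr.mk (α ++ γ.drop β.length) (Λ.relRange X (γ.drop β.length) ∩ Y) δ
    else if γ <+: β ∧ (X ∩ Λ.relRange Y (β.drop γ.length)).Nonempty then
      Tr.mk α (X ∩ Λ.relRange Y (β.drop γ.length)) (δ ++ β.drop γ.length)
    else Tr.zero

/-! ## Filters in `E(S)`, characters, and the tight spectrum -/

/-- A filter in `E(S)`: a nonempty subset of `E(S) ∖ {0}` closed under products and
upward closed in the natural order (`p ≤ q ↔ pq = p`). -/
def IsFilterES (ξ : Set (Tr V A)) : Prop :=
  ξ.Nonempty ∧ (∀ t ∈ ξ, t ∈ Λ.ESet ∧ t ≠ Tr.zero) ∧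
  (∀ p ∈ ξ, ∀ q ∈ ξ, Λ.tmul p q ∈ ξ) ∧
  (∀ p ∈ ξ, ∀ q ∈ Λ.ESet, Λ.tmul p q = p → q ∈ ξ)

/-- An ultrafilter in `E(S)`. -/
def IsUltraES (ξ : Set (Tr V A)) : Prop :=
  Λ.IsFilterES ξ ∧ ∀ ζ, Λ.IsFilterES ζ → ξ ⊆ ζ → ξ = ζ

/-- The character (indicator function) of a filter. -/
noncomputable def charOf (_Λ : LblSp V Ed A) (ξ : Set (Tr V A)) : Tr V A → Bool :=
  fun t => if t ∈ ξ then true else false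

/-- A character of `E(S)`: a nonzero, zero- and meet-preserving `{0,1}`-valued map on
`E(S)` (encoded as a map on triples vanishing outside `E(S)`). -/
def IsChar (φ : Tr V A → Bool) : Prop :=
  (∃ e, φ e = true) ∧ (∀ e, e ∉ Λ.ESet → φ e = false) ∧ φ Tr.zero = false ∧
  ∀ e ∈ Λ.ESet, ∀ f ∈ Λ.ESet, φ (Λ.tmul e f) = (φ e && φ f)

/-- The tight spectrum `Ê_tight`: the closure, within the space of characters with the
topology of pointwise convergence, of the set of characters of ultrafilters. -/
def tightSpectrum : Set (Tr V A → Bool) :=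
  {φ | Λ.IsChar φ} ∩ closure {φ | ∃ ξ, Λ.IsUltraES ξ ∧ φ = Λ.charOf ξ}

/-- A tight filter: a filter whose character lies in the tight spectrum. -/
def IsTightFilter (ξ : Set (Tr V A)) : Prop :=
  Λ.IsFilterES ξ ∧ Λ.charOf ξ ∈ Λ.tightSpectrum

/-- `ξ_{|β|} = {B : (β, B, β) ∈ ξ}`, the filter of `ξ` at level `β`. -/
def filterAt (_Λ : LblSp V Ed A) (ξ : Set (Tr V A)) (β : List A) : Set (Set V) :=
  {B | Tr.mk β B β ∈ ξ}

/-- `α` is the word associated with the filter `ξ` (i.e. `ξ = ξ^α`): the nonempty finite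
beginnings of `α` are exactly the words appearing in elements of `ξ`. -/
def HasWord (_Λ : LblSp V Ed A) (ξ : Set (Tr V A)) (α : Word A) : Prop :=
  ∀ β : List A, β ≠ [] → ((∃ B, Tr.mk β B β ∈ ξ) ↔ WPrefix β α)

/-! ## Filters and ultrafilters in `𝒜^β` -/

/-- A filter in the Boolean algebra `𝒜^β`. -/
def IsFilterAset (β : List A) (F : Set (Set V)) : Prop :=
  F.Nonempty ∧ F ⊆ Λ.Aset β ∧ (∀ X ∈ F, X.Nonempty) ∧
  (∀ X ∈ F, ∀ Y ∈ F, X ∩ Y ∈ F) ∧ (∀ X ∈ F, ∀ Y ∈ Λ.Aset β, X ⊆ Y → Y ∈ F)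

/-- An ultrafilter in `𝒜^β` (an element of `X_β`). -/
def IsUltraAset (β : List A) (F : Set (Set V)) : Prop :=
  Λ.IsFilterAset β F ∧ ∀ G, Λ.IsFilterAset β G → F ⊆ G → F = G

/-- The gluing map `g_{(α)β}(F) = {C ∩ r(αβ) : C ∈ F}` on ultrafilters. -/
noncomputable def gmap (α β : List A) (F : Set (Set V)) : Set (Set V) :=
  {X | ∃ C ∈ F, X = C ∩ Λ.rangeL (α ++ β)}

/-- The cutting map `h_{[α]β}(F) = {C ∈ 𝒜^β : D ⊆ C for some D ∈ F}` on ultrafilters. -/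
noncomputable def hmap (α β : List A) (F : Set (Set V)) : Set (Set V) :=
  {C | C ∈ Λ.Aset β ∧ ∃ D ∈ F, D ⊆ C}

/-! ## Cutting and gluing of (tight) filters in `E(S)` -/

/-- The cutting map `H_{[α]β} : T^{αβ} → T^{(α)β}` (word-free formulation): the filter
whose family is `η_n = h_{[α]β_{1,n}}(ξ_{n+|α|})`; `H_{[ω]β}` is the identity. -/
noncomputable def Hcut (α : List A) (ξ : Set (Tr V A)) : Set (Tr V A) :=
  if α = [] then ξ
  else {t | ∃ δ B, t = Tr.mk δ B δ ∧ B ∈ Λ.Aset δ ∧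
        ∃ D, Tr.mk (α ++ δ) D (α ++ δ) ∈ ξ ∧ D ⊆ B}

/-- The gluing map `G_{(α)β} : T^{(α)β} → T^{αβ}` (word-free formulation): the filter with
family `η_{|α|+n} = g_{(α)β_{1,n}}(ξ_n)` for `n ≥ 1` and `η_i = f_{α_{1,i}[…]}(…)` for
`i ≤ |α|`, with the two cases according to whether the word of `ξ` is empty (`β = ω`)
or not; `G_{(ω)β}` is the identity. -/
noncomputable def Gglue (α : List A) (ξ : Set (Tr V A)) : Set (Tr V A) :=
  if α = [] then ξ
  else if ∃ (δ : List A) (B : Set V), δ ≠ [] ∧ Tr.mk δ B δ ∈ ξ then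
    {t | ∃ δ B, t = Tr.mk δ B δ ∧
      ((α <+: δ ∧ α ≠ δ ∧ ∃ C, Tr.mk (δ.drop α.length) C (δ.drop α.length) ∈ ξ ∧
          B = C ∩ Λ.rangeL δ) ∨
       (δ <+: α ∧ B ∈ Λ.Aset δ ∧ ∃ (b : A) (C : Set V), Tr.mk [b] C [b] ∈ ξ ∧
          Λ.relRange B (α.drop δ.length ++ [b]) = C ∩ Λ.rangeL (α ++ [b])))}
  else
    {t | ∃ δ B, t = Tr.mk δ B δ ∧ δ <+: α ∧ B ∈ Λ.Aset δ ∧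
      ∃ C, Tr.mk [] C [] ∈ ξ ∧ Λ.relRange B (α.drop δ.length) = C ∩ Λ.rangeL α}

/-- `T^β`: the set of tight filters with associated word `β`. -/
def TWord (β : Word A) : Set (Set (Tr V A)) :=
  {ξ | Λ.IsTightFilter ξ ∧ Λ.HasWord ξ β}

/-- `T^{(α)β} = {ξ ∈ T^β : r(α) ∈ ξ_0}` (equal to `T^β` when `α = ω`), the domain of the
gluing map `G_{(α)β}`. -/
def TGlueDom (α : List A) (β : Word A) : Set (Set (Tr V A)) :=
  {ξ | Λ.IsTightFilter ξ ∧ Λ.HasWord ξ β ∧ (α ≠ [] → Tr.mk [] (Λ.rangeL α) [] ∈ ξ)}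

/-! ## The groupoid `Γ` -/

/-- The defining relation of
`Γ = {(ξ^{aγ}, |a|-|b|, η^{bγ}) ∈ T × ℤ × T : H_{[a]γ}(ξ^{aγ}) = H_{[b]γ}(η^{bγ})}`. -/
def InGamma (η : Set (Tr V A)) (m : ℤ) (ξ : Set (Tr V A)) : Prop :=
  ∃ (a b : List A) (γ : Word A), a ∈ Λ.LStar ∧ b ∈ Λ.LStar ∧ Λ.IsWordW γ ∧
    η ∈ Λ.TWord (wappend a γ) ∧ ξ ∈ Λ.TWord (wappend b γ) ∧
    m = (a.length : ℤ) - (b.length : ℤ) ∧ Λ.Hcut a η = Λ.Hcut b ξ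

/-- `Γ` as a set of raw triples. -/
def GammaRaw : Set (Set (Tr V A) × ℤ × Set (Tr V A)) :=
  {p | Λ.InGamma p.1 p.2.1 p.2.2}

/-- The basic set `Z_{s,e:e₁,…,eₙ}` of `Γ` (raw version), for `s = (μ, X, ν)`:
triples `(η^{μγ}, |μ|-|ν|, ξ^{νγ}) ∈ Γ` with `e ∈ ξ`, `eᵢ ∉ ξ` and
`H_{[μ]γ}(η) = H_{[ν]γ}(ξ)`. -/
noncomputable def ZrawGen (μ ν : List A) (e : Tr V A) (es : List (Tr V A)) :
    Set (Set (Tr V A) × ℤ × Set (Tr V A)) :=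
  {p | Λ.InGamma p.1 p.2.1 p.2.2 ∧ p.2.1 = (μ.length : ℤ) - (ν.length : ℤ) ∧
       e ∈ p.2.2 ∧ (∀ f ∈ es, f ∉ p.2.2) ∧
       ∃ γ : Word A, Λ.HasWord p.1 (wappend μ γ) ∧ Λ.HasWord p.2.2 (wappend ν γ) ∧
         Λ.Hcut μ p.1 = Λ.Hcut ν p.2.2}

/-- `Z_s = Z_{s, s*s}` for `s = (μ, X, ν)` (raw version). -/
noncomputable def Zraw (μ : List A) (X : Set V) (ν : List A) :
    Set (Set (Tr V A) × ℤ × Set (Tr V A)) :=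
  Λ.ZrawGen μ ν (Tr.mk ν X ν) []

/-- The basic set `V_{e:e₁,…,eₙ} = U_{e:e₁,…,eₙ} ∩ T` of the tight filter space
(raw version). -/
def VrawGen (e : Tr V A) (es : List (Tr V A)) : Set (Set (Tr V A)) :=
  {ξ | Λ.IsTightFilter ξ ∧ e ∈ ξ ∧ ∀ f ∈ es, f ∉ ξ}

/-- The shift map `σ : T^{(1)} → T`, `σ(ξ^{aγ}) = H_{[a]γ}(ξ^{aγ})` (extended by the
identity off its domain). -/
noncomputable def sigmaMap (ξ : Set (Tr V A)) : Set (Tr V A) :=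
  if h : ∃ a : A, ∃ B : Set V, Tr.mk [a] B [a] ∈ ξ then Λ.Hcut [h.choose] ξ else ξ

/-- The Renault–Deaconu basic set
`𝒱(X, Y, m, n) = {(η, m-n, ξ) ∈ Γ : (η, ξ) ∈ X × Y, σ^m(η) = σ^n(ξ)}` (raw version). -/
noncomputable def VrdRaw (Xs Ys : Set (Set (Tr V A))) (m n : ℕ) :
    Set (Set (Tr V A) × ℤ × Set (Tr V A)) :=
  {p | Λ.InGamma p.1 p.2.1 p.2.2 ∧ p.2.1 = (m : ℤ) - (n : ℤ) ∧
       p.1 ∈ Xs ∧ p.2.2 ∈ Ys ∧ (Λ.sigmaMap)^[m] p.1 = (Λ.sigmaMap)^[n] p.2.2}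

/-! ## The groupoid of germs `𝒢_tight` -/

/-- The action `θ_s(φ)(e) = φ(s* e s)` of `S` on characters. -/
noncomputable def theta (s : Tr V A) (φ : Tr V A → Bool) : Tr V A → Bool :=
  fun e => if e ∈ Λ.ESet then φ (Λ.tmul (Λ.tmul (Tr.tstar s) e) s) else false

/-- `Ω = {(s, φ) ∈ S × Ê_tight : φ ∈ D_{s*s}}`. -/
noncomputable def Omega : Set (Tr V A × (Tr V A → Bool)) :=
  {p | p.1 ∈ Λ.SSet ∧ p.2 ∈ Λ.tightSpectrum ∧ p.2 (Λ.tmul (Tr.tstar p.1) p.1) = true}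

/-- The germ equivalence relation on `Ω`: `(s,φ) ∼ (t,ψ)` iff `φ = ψ` and there is
`e ∈ E(S)` with `φ(e) = 1` and `se = te`. -/
noncomputable def germEquiv (p q : Tr V A × (Tr V A → Bool)) : Prop :=
  p.2 = q.2 ∧ ∃ e ∈ Λ.ESet, p.2 e = true ∧ Λ.tmul p.1 e = Λ.tmul q.1 e

/-- The map `Φ` at the level of `Ω`: for `t = (β, X, γ)` and `φ` with filter `ξ^α`
(where `α = γα'`), `Φ[t,φ] = ((G_{(β)α'} ∘ H_{[γ]α'})(ξ^α), |β|-|γ|, ξ^α)`. -/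
noncomputable def PhiRaw : Tr V A → (Tr V A → Bool) → Set (Tr V A) × ℤ × Set (Tr V A)
  | Tr.zero, _ => (∅, 0, ∅)
  | Tr.mk β _ γ, φ =>
      (Λ.Gglue β (Λ.Hcut γ {e | φ e = true}), (β.length : ℤ) - (γ.length : ℤ),
        {e | φ e = true})

/-! ## Miscellaneous notions -/

/-- `ℒ(XE¹) = {ℒ(e) : e ∈ E¹, s(e) ∈ X}`. -/
def labE (X : Set V) : Set A := {a | ∃ e, Λ.lab e = a ∧ Λ.src e ∈ X}

/-- The set `E⁰_sink` of sinks. -/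
def sinks : Set V := {v | ∀ e, Λ.src e ≠ v}

/-- The filter in `E(S)` associated with a pair (word, complete family). -/
def pairFilter (_Λ : LblSp V Ed A) (α : Word A) (F : ℕ → Set (Set V)) : Set (Tr V A) :=
  {t | ∃ (n : ℕ) (B : Set V), (n : ℕ∞) ≤ wlength α ∧ B ∈ F n ∧
    t = Tr.mk (wprefix α n) B (wprefix α n)}

/-- A complete family for the word `α`: `F n` is a filter in `𝒜^{α_{1,n}}` for
`1 ≤ n ≤ |α|` (`F 0` is a filter in `𝒜` or empty, and a filter if `α = ω`), and
`F n = {X ∈ 𝒜^{α_{1,n}} : r(X, α_{n+1}) ∈ F (n+1)}` for all `n < |α|`. -/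
noncomputable def IsCompleteFamily (α : Word A) (F : ℕ → Set (Set V)) : Prop :=
  Λ.IsWordW α ∧
  (∀ n : ℕ, 1 ≤ n → (n : ℕ∞) ≤ wlength α → Λ.IsFilterAset (wprefix α n) (F n)) ∧
  (F 0 = ∅ ∨ Λ.IsFilterAset [] (F 0)) ∧
  (wlength α = 0 → Λ.IsFilterAset [] (F 0)) ∧
  (∀ n : ℕ, ((n + 1 : ℕ) : ℕ∞) ≤ wlength α →
    F n = {X | X ∈ Λ.Aset (wprefix α n) ∧
      Λ.relRange X ((wprefix α (n + 1)).drop n) ∈ F (n + 1)})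

/-! ## The tight filter space `T` and the groupoid `Γ` as types -/

/-- The space `T` of tight filters. -/
structure TightT where
  carrier : Set (Tr V A)
  tight : Λ.IsTightFilter carrier

/-- The topology of `T`, induced from pointwise convergence of characters. -/
noncomputable instance : TopologicalSpace Λ.TightT :=
  TopologicalSpace.induced (fun ξ => Λ.charOf ξ.carrier) inferInstance

/-- The groupoid `Γ ⊆ T × ℤ × T` as a type. -/
structure GammaT where
  fst : Λ.TightT
  mid : ℤ
  lst : Λ.TightT
  mem : Λ.InGamma fst.carrier mid lst.carrier

/-- The raw triple underlying an element of `Γ`. -/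
def rawOf (p : Λ.GammaT) : Set (Tr V A) × ℤ × Set (Tr V A) :=
  (p.fst.carrier, p.mid, p.lst.carrier)

/-- The collection of all sets `Z_{s,e:e₁,…,eₙ}` (for `s ∈ S`, `e, eᵢ ∈ E(S)`),
as subsets of `Γ`. -/
noncomputable def ZBasisT : Set (Set Λ.GammaT) :=
  {Z | ∃ (μ : List A) (X : Set V) (ν : List A) (e : Tr V A) (es : List (Tr V A)),
    Tr.mk μ X ν ∈ Λ.SSet ∧ e ∈ Λ.ESet ∧ (∀ f ∈ es, f ∈ Λ.ESet) ∧
    Z = {p : Λ.GammaT | Λ.rawOf p ∈ Λ.ZrawGen μ ν e es}}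

/-- The topology on `Γ` induced by the isomorphism `Φ` from the germ topology of
`𝒢_tight`, generated by the images of the basic sets `Θ(s, 𝒰)` with `𝒰 ⊆ D_{s*s}`
open in the tight spectrum. -/
noncomputable def PhiTopology : TopologicalSpace Λ.GammaT :=
  TopologicalSpace.generateFrom
    {Z | ∃ (s : Tr V A) (U : Set (Tr V A → Bool)), s ∈ Λ.SSet ∧
      (∃ W, IsOpen W ∧ U = W ∩ Λ.tightSpectrum) ∧
      (∀ φ ∈ U, φ (Λ.tmul (Tr.tstar s) s) = true) ∧
      Z = {p : Λ.GammaT | ∃ φ ∈ U, (s, φ) ∈ Λ.Omega ∧ Λ.PhiRaw s φ = Λ.rawOf p}}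

end LblSp

namespace LblSp

variable {V : Type u} {Ed : Type v} {A : Type w} (Λ : LblSp V Ed A)

/-!
A point of `Z_{(α,X,β)} ∩ Z_{(μ,Y,ν)}` is a triple `(η, n, ξ)` with `(β,X,β)` and
`(ν,Y,ν)` in the filter `ξ`. The words of a filter are linearly ordered by the prefix relation, so one
of `β`, `ν` extends the other, say `ν = βδ`; comparing the word of `η` and the degree
`|α| - |β| = |μ| - |ν|` then forces `μ = αδ`, and the product of the two idempotents in `ξ`
is `(βδ, r(X,δ) ∩ Y, βδ)`, which must be nonzero. Conversely, a point of
`Z_{(αδ, r(X,δ) ∩ Y, βδ)}` lies in both sets by upward closure of `ξ`, once the common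
suffix `δ` can be cancelled from `H_{[αδ]γ}(η) = H_{[βδ]γ}(ξ)`. This cancellation compares
the levels of both filters; at levels below `|αδ|` it needs weak left-resolvingness to pull
elements of a filter back along `δ`.
-/

section

variable {Λ}

theorem wprefix_inr_iff {b : List A} {f : ℕ → A} :
    WPrefix b (Sum.inr f) ↔ ∀ i (h : i < b.length), b[i] = f i := by
  simp only [WPrefix, Sum.elim_inr]
  constructor
  · intro h i hi
    rw [List.getElem_of_eq h, List.getElem_ofFn]
  · intro h
    refine List.ext_getElem (by simp) fun i hi _ => ?_
    rw [List.getElem_ofFn]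
    exact h i hi

theorem wprefix_inr_iff_prefix_ofFn {b : List A} {f : ℕ → A} {n : ℕ} (hn : b.length ≤ n) :
    WPrefix b (Sum.inr f) ↔ b <+: List.ofFn fun i : Fin n => f i := by
  rw [wprefix_inr_iff, List.prefix_iff_getElem]
  simp [hn]

theorem wprefix_nil (γ : Word A) : WPrefix [] γ := by
  cases γ <;> simp [WPrefix]

theorem WPrefix.of_prefix {b c : List A} {γ : Word A} (hbc : b <+: c) (hc : WPrefix c γ) :
    WPrefix b γ := by
  cases γ with
  | inl l => exact hbc.trans hc
  | inr f =>
    rw [wprefix_inr_iff_prefix_ofFn hbc.length_le]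
    exact hbc.trans ((wprefix_inr_iff_prefix_ofFn le_rfl).1 hc)

theorem WPrefix.prefix_of_length_le {b c : List A} {γ : Word A} (hb : WPrefix b γ)
    (hc : WPrefix c γ) (h : b.length ≤ c.length) : b <+: c := by
  cases γ with
  | inl l => exact List.prefix_of_prefix_length_le hb hc h
  | inr f =>
    exact List.prefix_of_prefix_length_le ((wprefix_inr_iff_prefix_ofFn h).1 hb)
      ((wprefix_inr_iff_prefix_ofFn le_rfl).1 hc) h

theorem WPrefix.eq_of_length {b c : List A} {γ : Word A} (hb : WPrefix b γ)
    (hc : WPrefix c γ) (h : b.length = c.length) : b = c :=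
  (WPrefix.prefix_of_length_le hb hc h.le).eq_of_length h

theorem wappend_assoc (a b : List A) (γ : Word A) :
    wappend a (wappend b γ) = wappend (a ++ b) γ := by
  cases γ with
  | inl l => simp [wappend]
  | inr f =>
    simp only [wappend, Sum.elim_inr, Sum.inr.injEq, List.length_append]
    funext n
    by_cases h₁ : n < a.length
    · rw [dif_pos h₁, dif_pos (by omega), List.get_eq_getElem, List.get_eq_getElem,
        List.getElem_append_left h₁]
    by_cases h₂ : n < a.length + b.length
    · rw [dif_neg h₁, dif_pos (by omega), dif_pos h₂]
      simp [List.getElem_append_right (Nat.le_of_not_lt h₁)]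
    · rw [dif_neg h₁, dif_neg (by omega), dif_neg h₂, Nat.sub_sub]

theorem wprefix_append_iff (a b : List A) (γ : Word A) :
    WPrefix (a ++ b) (wappend a γ) ↔ WPrefix b γ := by
  cases γ with
  | inl l => exact List.prefix_append_right_inj a
  | inr f =>
    simp only [wappend, Sum.elim_inr, wprefix_inr_iff, List.length_append]
    constructor
    · intro h i hi
      simpa [List.getElem_append_right] using h (a.length + i) (by omega)
    · intro h i hi
      by_cases hia : i < a.length
      · simp [List.getElem_append_left hia, hia]
      · simpa [List.getElem_append_right (Nat.le_of_not_lt hia), hia]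
          using h (i - a.length) (by omega)

theorem wprefix_wappend_self (a : List A) (γ : Word A) : WPrefix a (wappend a γ) := by
  simpa using (wprefix_append_iff a [] γ).2 (wprefix_nil γ)

theorem HasWord.wprefix_of_mem {ξ : Set (Tr V A)} {w : Word A} (hw : Λ.HasWord ξ w)
    {c : List A} {D : Set V} (h : Tr.mk c D c ∈ ξ) : WPrefix c w := by
  rcases eq_or_ne c [] with rfl | hc
  · exact wprefix_nil w
  · exact (hw c hc).1 ⟨D, h⟩

theorem relRange_nil (X : Set V) : Λ.relRange X [] = X := if_pos rfl

theorem rangeL_nil : Λ.rangeL [] = Set.univ := relRange_nil Set.univ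

theorem relRange_mono {X Y : Set V} (h : X ⊆ Y) (τ : List A) :
    Λ.relRange X τ ⊆ Λ.relRange Y τ := by
  unfold relRange
  split
  · exact h
  · rintro v ⟨l, hne, hch, hmap, hsrc, hlast⟩
    exact ⟨l, hne, hch, hmap, h hsrc, hlast⟩

theorem nonempty_of_nonempty_relRange {X : Set V} {τ : List A}
    (h : (Λ.relRange X τ).Nonempty) : X.Nonempty := by
  unfold relRange at h
  split at h
  · exact h
  · obtain ⟨v, l, hne, hch, hmap, hsrc, hlast⟩ := h
    exact ⟨_, hsrc⟩

theorem rangeL_append_subset (a b : List A) : Λ.rangeL (a ++ b) ⊆ Λ.rangeL b := by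
  rcases eq_or_ne b [] with rfl | hb
  · rw [rangeL_nil]
    exact Set.subset_univ _
  intro v hv
  rw [rangeL, relRange, if_neg (by simp [hb])] at hv
  obtain ⟨l, -, hch, hmap, -, rfl⟩ := hv
  have hdrop : l.drop a.length ≠ [] := by
    intro h
    apply hb
    rw [← List.drop_left (l₁ := a) (l₂ := b), ← hmap, ← List.map_drop, h, List.map_nil]
  rw [rangeL, relRange, if_neg hb]
  exact ⟨_, hdrop, hch.drop _, by rw [List.map_drop, hmap, List.drop_left], trivial,
    by rw [List.getLast_drop]⟩

theorem map_lab_mem_LStar {l : List Ed} (hl : List.IsChain (fun e f => Λ.rng e = Λ.src f) l) :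
    l.map Λ.lab ∈ Λ.LStar := by
  rcases eq_or_ne l [] with rfl | hne
  · exact Or.inl rfl
  · exact Or.inr ⟨l, hne, hl, rfl⟩

theorem mem_LStar_of_append {u τ : List A} (h : u ++ τ ∈ Λ.LStar) :
    u ∈ Λ.LStar ∧ τ ∈ Λ.LStar := by
  rcases h with h | ⟨l, -, hch, hmap⟩
  · obtain ⟨rfl, rfl⟩ := List.append_eq_nil_iff.1 h
    exact ⟨Or.inl rfl, Or.inl rfl⟩
  · refine ⟨?_, ?_⟩
    · simpa [List.map_take, hmap] using map_lab_mem_LStar (hch.take u.length)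
    · simpa [List.map_drop, hmap] using map_lab_mem_LStar (hch.drop u.length)

theorem tmul_mk_mk_append (u τ : List A) (B C : Set V) :
    Λ.tmul (Tr.mk u B u) (Tr.mk (u ++ τ) C (u ++ τ)) =
      if (Λ.relRange B τ ∩ C).Nonempty then Tr.mk (u ++ τ) (Λ.relRange B τ ∩ C) (u ++ τ)
      else Tr.zero := by
  rcases eq_or_ne τ [] with rfl | hτ
  · simp [tmul, relRange_nil]
  · have hlen : ¬ u ++ τ <+: u := fun h => hτ (by simpa using h.length_le)
    simp [tmul, hlen]

theorem tmul_mk_append_mk {u τ : List A} {B D : Set V} (hDB : D ⊆ Λ.relRange B τ)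
    (hD : D.Nonempty) :
    Λ.tmul (Tr.mk (u ++ τ) D (u ++ τ)) (Tr.mk u B u) = Tr.mk (u ++ τ) D (u ++ τ) := by
  rcases eq_or_ne τ [] with rfl | hτ
  · rw [relRange_nil] at hDB
    simp [tmul, relRange_nil, Set.inter_eq_left.2 hDB, hD]
  · have hlen : ¬ u ++ τ <+: u := fun h => hτ (by simpa using h.length_le)
    simp [tmul, hlen, Set.inter_eq_left.2 hDB, hD]

theorem eq_and_mem_of_mk_mem_ESet {a b : List A} {X : Set V} (h : Tr.mk a X b ∈ Λ.ESet) :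
    b = a ∧ a ∈ Λ.LStar ∧ X ∈ Λ.Aset a ∧ X.Nonempty := by
  rcases h with h | ⟨a', X', h, ha, hX, hne⟩
  · cases h
  · obtain ⟨rfl, rfl, rfl⟩ := Tr.mk.inj h
    exact ⟨rfl, ha, hX, hne⟩

theorem mem_Aset_right_of_mk_mem_SSet {a b : List A} {X : Set V} (h : Tr.mk a X b ∈ Λ.SSet) :
    X ∈ Λ.Aset b := by
  rcases h with h | ⟨a', X', b', h, -, -, -, hX, -⟩
  · cases h
  · obtain ⟨rfl, rfl, rfl⟩ := Tr.mk.inj h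
    exact hX

namespace IsFilterES

variable {ξ : Set (Tr V A)}

theorem mk_mem_ESet (hf : Λ.IsFilterES ξ) {a b : List A} {X : Set V} (h : Tr.mk a X b ∈ ξ) :
    b = a ∧ a ∈ Λ.LStar ∧ X ∈ Λ.Aset a ∧ X.Nonempty :=
  eq_and_mem_of_mk_mem_ESet (hf.2.1 _ h).1

theorem mk_mem_of_subset_relRange (hf : Λ.IsFilterES ξ) {u τ : List A} {B D : Set V}
    (hD : Tr.mk (u ++ τ) D (u ++ τ) ∈ ξ) (hB : B ∈ Λ.Aset u)
    (hDB : D ⊆ Λ.relRange B τ) : Tr.mk u B u ∈ ξ := by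
  obtain ⟨-, hL, -, hDne⟩ := hf.mk_mem_ESet hD
  refine hf.2.2.2 _ hD _ ?_ (tmul_mk_append_mk hDB hDne)
  exact Or.inr ⟨u, B, rfl, (mem_LStar_of_append hL).1, hB,
    nonempty_of_nonempty_relRange (hDne.mono hDB)⟩

theorem mk_mem_of_subset (hf : Λ.IsFilterES ξ) {u : List A} {B D : Set V}
    (hD : Tr.mk u D u ∈ ξ)
    (hB : B ∈ Λ.Aset u) (hDB : D ⊆ B) : Tr.mk u B u ∈ ξ :=
  hf.mk_mem_of_subset_relRange (τ := []) (by simpa using hD) hB (by rwa [relRange_nil])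

theorem mk_relRange_inter_mem (hf : Λ.IsFilterES ξ) {u τ : List A} {B C : Set V}
    (hB : Tr.mk u B u ∈ ξ)
    (hC : Tr.mk (u ++ τ) C (u ++ τ) ∈ ξ) :
    Tr.mk (u ++ τ) (Λ.relRange B τ ∩ C) (u ++ τ) ∈ ξ := by
  have h := hf.2.2.1 _ hB _ hC
  rw [tmul_mk_mk_append] at h
  split_ifs at h
  · exact h
  · exact absurd rfl (hf.2.1 _ h).2

/-- The witness is `E ∩ B` for any `E` in `ξ` at level `u`: weak left-resolvingness gives
`r(E ∩ B, τ) = r(E, τ) ∩ r(B, τ) ⊇ r(E, τ) ∩ D`, an element of `ξ` at level `uτ`. -/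
theorem exists_mk_mem_subset (hf : Λ.IsFilterES ξ) (hwlr : Λ.IsWLR) {w : Word A}
    (hw : Λ.HasWord ξ w) {u τ : List A} {B D : Set V} (hD : Tr.mk (u ++ τ) D (u ++ τ) ∈ ξ)
    (hB : B ∈ Λ.𝒜) (hDB : D ⊆ Λ.relRange B τ) :
    ∃ C, Tr.mk u C u ∈ ξ ∧ C ⊆ B := by
  rcases eq_or_ne τ [] with rfl | hτ
  · exact ⟨D, by simpa using hD, by rwa [relRange_nil] at hDB⟩
  rcases eq_or_ne u [] with rfl | hu
  · exact ⟨B, hf.mk_mem_of_subset_relRange hD ⟨hB, by simp [rangeL_nil]⟩ hDB, subset_rfl⟩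
  obtain ⟨E, hE⟩ :=
    (hw u hu).2 (WPrefix.of_prefix (List.prefix_append u τ) (hw.wprefix_of_mem hD))
  obtain ⟨-, -, ⟨hE𝒜, hEr⟩, -⟩ := hf.mk_mem_ESet hE
  have hτL := (mem_LStar_of_append (hf.mk_mem_ESet hD).2.1).2
  refine ⟨E ∩ B, hf.mk_mem_of_subset_relRange (hf.mk_relRange_inter_mem hE hD)
    ⟨hwlr.toIsLS.inter_mem _ hE𝒜 _ hB, Set.inter_subset_left.trans hEr⟩ ?_,
    Set.inter_subset_right⟩
  rw [hwlr.wlr _ hE𝒜 _ hB _ hτL hτ]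
  exact Set.inter_subset_inter_right _ hDB

theorem mem_Hcut_iff (hf : Λ.IsFilterES ξ) {a : List A} {t : Tr V A} :
    t ∈ Λ.Hcut a ξ ↔ ∃ ρ B, t = Tr.mk ρ B ρ ∧ B ∈ Λ.Aset ρ ∧
      ∃ D, Tr.mk (a ++ ρ) D (a ++ ρ) ∈ ξ ∧ D ⊆ B := by
  unfold Hcut
  split_ifs with ha
  · subst ha
    constructor
    · intro ht
      rcases hf.2.1 t ht with ⟨rfl | ⟨ρ, B, rfl, -, hB, -⟩, hnz⟩
      · exact absurd rfl hnz
      · exact ⟨ρ, B, rfl, hB, B, ht, subset_rfl⟩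
    · rintro ⟨ρ, B, rfl, hB, D, hD, hDB⟩
      exact hf.mk_mem_of_subset hD hB hDB
  · rfl

theorem mk_mem_Hcut_iff (hf : Λ.IsFilterES ξ) {a ρ : List A} {B : Set V} :
    Tr.mk ρ B ρ ∈ Λ.Hcut a ξ ↔
      B ∈ Λ.Aset ρ ∧ ∃ D, Tr.mk (a ++ ρ) D (a ++ ρ) ∈ ξ ∧ D ⊆ B := by
  rw [hf.mem_Hcut_iff]
  constructor
  · rintro ⟨ρ', B', h, hB, hD⟩
    obtain ⟨rfl, rfl, -⟩ := Tr.mk.inj h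
    exact ⟨hB, hD⟩
  · rintro ⟨hB, hD⟩
    exact ⟨ρ, B, rfl, hB, hD⟩

end IsFilterES

theorem Hcut_subset_of_Hcut_append_eq (hwlr : Λ.IsWLR) {η ξ : Set (Tr V A)}
    (hη : Λ.IsFilterES η) (hξ : Λ.IsFilterES ξ) {a b δ : List A} {γ w : Word A}
    (hwη : Λ.HasWord η (wappend a (wappend δ γ))) (hwξ : Λ.HasWord ξ w)
    (h : Λ.Hcut (a ++ δ) η = Λ.Hcut (b ++ δ) ξ) : Λ.Hcut a η ⊆ Λ.Hcut b ξ := by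
  intro t ht
  obtain ⟨ρ, B, rfl, hB, D, hD, hDB⟩ := hη.mem_Hcut_iff.1 ht
  have hρ : WPrefix ρ (wappend δ γ) := (wprefix_append_iff a ρ _).1 (hwη.wprefix_of_mem hD)
  refine hξ.mk_mem_Hcut_iff.2 ⟨hB, ?_⟩
  rcases le_or_gt δ.length ρ.length with hle | hlt
  · obtain ⟨ρ', rfl⟩ := WPrefix.prefix_of_length_le (wprefix_wappend_self δ γ) hρ hle
    have hD' : Tr.mk ρ' D ρ' ∈ Λ.Hcut (a ++ δ) η := by
      obtain ⟨-, -, ⟨hD𝒜, hDr⟩, -⟩ := hη.mk_mem_ESet hD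
      refine hη.mk_mem_Hcut_iff.2 ⟨⟨hD𝒜, ?_⟩, D, by simpa using hD, subset_rfl⟩
      exact hDr.trans (by simpa using rangeL_append_subset (a ++ δ) ρ')
    obtain ⟨-, D', hD', hD'D⟩ := hξ.mk_mem_Hcut_iff.1 (h ▸ hD')
    exact ⟨D', by simpa using hD', hD'D.trans hDB⟩
  · -- `δ = ρτ`: push `D` down to level `aδ`, move it across `h`, and pull it back up in `ξ`.
    obtain ⟨τ, rfl⟩ := WPrefix.prefix_of_length_le hρ (wprefix_wappend_self δ γ) hlt.le
    have hτ : τ ≠ [] := by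
      rintro rfl
      simp at hlt
    obtain ⟨D₀, hD₀⟩ := (hwη (a ++ (ρ ++ τ)) (by simp [hτ])).2
      ((wprefix_append_iff _ _ _).2 (wprefix_wappend_self _ γ))
    have hP := hη.mk_relRange_inter_mem (τ := τ) hD (by simpa using hD₀)
    have hQ : Tr.mk [] (Λ.relRange D τ ∩ D₀) [] ∈ Λ.Hcut (a ++ (ρ ++ τ)) η :=
      hη.mk_mem_Hcut_iff.2 ⟨⟨(hη.mk_mem_ESet hP).2.2.1.1, by simp [rangeL_nil]⟩, _,
        by simpa using hP, subset_rfl⟩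
    obtain ⟨-, D', hD', hD'D⟩ := hξ.mk_mem_Hcut_iff.1 (h ▸ hQ)
    exact hξ.exists_mk_mem_subset hwlr hwξ (u := b ++ ρ) (τ := τ) (by simpa using hD') hB.1
      (hD'D.trans (Set.inter_subset_left.trans (relRange_mono hDB τ)))

theorem Hcut_eq_of_Hcut_append_eq (hwlr : Λ.IsWLR) {η ξ : Set (Tr V A)}
    (hη : Λ.IsFilterES η) (hξ : Λ.IsFilterES ξ) {a b δ : List A} {γ : Word A}
    (hwη : Λ.HasWord η (wappend a (wappend δ γ)))
    (hwξ : Λ.HasWord ξ (wappend b (wappend δ γ)))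
    (h : Λ.Hcut (a ++ δ) η = Λ.Hcut (b ++ δ) ξ) : Λ.Hcut a η = Λ.Hcut b ξ :=
  (Hcut_subset_of_Hcut_append_eq hwlr hη hξ hwη hwξ h).antisymm
    (Hcut_subset_of_Hcut_append_eq hwlr hξ hη hwξ hwη h.symm)

theorem InGamma.isFilterES {η ξ : Set (Tr V A)} {m : ℤ} (h : Λ.InGamma η m ξ) :
    Λ.IsFilterES η ∧ Λ.IsFilterES ξ := by
  obtain ⟨_, _, _, -, -, -, hη, hξ, -⟩ := h
  exact ⟨hη.1.1, hξ.1.1⟩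

theorem mem_Zraw_iff {μ ν : List A} {X : Set V} {p : Set (Tr V A) × ℤ × Set (Tr V A)} :
    p ∈ Λ.Zraw μ X ν ↔ Λ.InGamma p.1 p.2.1 p.2.2 ∧
      p.2.1 = (μ.length : ℤ) - (ν.length : ℤ) ∧ Tr.mk ν X ν ∈ p.2.2 ∧
      ∃ γ : Word A, Λ.HasWord p.1 (wappend μ γ) ∧ Λ.HasWord p.2.2 (wappend ν γ) ∧
        Λ.Hcut μ p.1 = Λ.Hcut ν p.2.2 := by
  simp [Zraw, ZrawGen]

theorem Zraw_inter_Zraw_append (hwlr : Λ.IsWLR) {α β δ : List A} {X Y : Set V}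
    (hX : X ∈ Λ.Aset β) (hY : Y ∈ Λ.Aset (β ++ δ)) :
    Λ.Zraw α X β ∩ Λ.Zraw (α ++ δ) Y (β ++ δ) =
      Λ.Zraw (α ++ δ) (Λ.relRange X δ ∩ Y) (β ++ δ) := by
  ext p
  simp only [Set.mem_inter_iff, mem_Zraw_iff]
  constructor
  · rintro ⟨⟨hΓ, -, hXp, -⟩, -, hm, hYp, hγ⟩
    exact ⟨hΓ, hm, hΓ.isFilterES.2.mk_relRange_inter_mem hXp hYp, hγ⟩
  · rintro ⟨hΓ, hm, hXY, γ, hwη, hwξ, hcut⟩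
    obtain ⟨hη, hξ⟩ := hΓ.isFilterES
    have hwη' : Λ.HasWord p.1 (wappend α (wappend δ γ)) := by rwa [wappend_assoc]
    have hwξ' : Λ.HasWord p.2.2 (wappend β (wappend δ γ)) := by rwa [wappend_assoc]
    refine ⟨⟨hΓ, ?_, hξ.mk_mem_of_subset_relRange hXY hX Set.inter_subset_left, _, hwη',
      hwξ', Hcut_eq_of_Hcut_append_eq hwlr hη hξ hwη' hwξ' hcut⟩,
      hΓ, hm, hξ.mk_mem_of_subset hXY hY Set.inter_subset_right, γ, hwη, hwξ, hcut⟩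
    rw [hm]
    push_cast [List.length_append]
    ring

theorem exists_eq_append_of_mem_Zraw_inter {α β μ ν : List A} {X Y : Set V}
    {p : Set (Tr V A) × ℤ × Set (Tr V A)} (h₁ : p ∈ Λ.Zraw α X β)
    (h₂ : p ∈ Λ.Zraw μ Y ν)
    (hlen : β.length ≤ ν.length) :
    ∃ δ, μ = α ++ δ ∧ ν = β ++ δ ∧ (Λ.relRange X δ ∩ Y).Nonempty := by
  obtain ⟨hΓ, hm₁, hX, γ₁, hwη₁, hwξ₁, -⟩ := mem_Zraw_iff.1 h₁
  obtain ⟨-, hm₂, hY, γ₂, hwη₂, hwξ₂, -⟩ := mem_Zraw_iff.1 h₂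
  have hξ := hΓ.isFilterES.2
  obtain ⟨δ, rfl⟩ :=
    WPrefix.prefix_of_length_le (hwξ₂.wprefix_of_mem hX) (wprefix_wappend_self ν γ₂) hlen
  refine ⟨δ, ?_, rfl, (hξ.mk_mem_ESet (hξ.mk_relRange_inter_mem hX hY)).2.2.2⟩
  have hμ : WPrefix μ (wappend α γ₁) := by
    rcases eq_or_ne μ [] with rfl | hμ
    · exact wprefix_nil _
    · obtain ⟨B, hB⟩ := (hwη₂ μ hμ).2 (wprefix_wappend_self μ γ₂)
      exact hwη₁.wprefix_of_mem hB
  have hαδ : WPrefix (α ++ δ) (wappend α γ₁) :=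
    (wprefix_append_iff α δ γ₁).2
      ((wprefix_append_iff β δ γ₁).1 (hwξ₁.wprefix_of_mem hY))
  refine WPrefix.eq_of_length hμ hαδ ?_
  simp only [List.length_append] at hm₂ ⊢
  omega

end

/-- For nonzero `(α, X, β), (μ, Y, ν) ∈ S`, the intersection
`Z_{(α,X,β)} ∩ Z_{(μ,Y,ν)}` equals `Z_{(μ, r(X,δ) ∩ Y, ν)}` if `μ = αδ`, `ν = βδ` and
`r(X,δ) ∩ Y ≠ ∅`; it equals `Z_{(α, X ∩ r(Y,δ), β)}` if `α = μδ`, `β = νδ` and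
`X ∩ r(Y,δ) ≠ ∅`; and it is empty otherwise. -/
theorem statement_13 (hΛ : Λ.IsNormal) (α β μ ν : List A) (X Y : Set V)
    (hs : Tr.mk α X β ∈ Λ.SSet) (ht : Tr.mk μ Y ν ∈ Λ.SSet) :
    (∀ δ : List A, μ = α ++ δ → ν = β ++ δ → (Λ.relRange X δ ∩ Y).Nonempty →
      Λ.Zraw α X β ∩ Λ.Zraw μ Y ν = Λ.Zraw μ (Λ.relRange X δ ∩ Y) ν) ∧
    (∀ δ : List A, α = μ ++ δ → β = ν ++ δ → (X ∩ Λ.relRange Y δ).Nonempty →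
      Λ.Zraw α X β ∩ Λ.Zraw μ Y ν = Λ.Zraw α (X ∩ Λ.relRange Y δ) β) ∧
    ((¬ ∃ δ : List A, μ = α ++ δ ∧ ν = β ++ δ ∧ (Λ.relRange X δ ∩ Y).Nonempty) →
     (¬ ∃ δ : List A, α = μ ++ δ ∧ β = ν ++ δ ∧ (X ∩ Λ.relRange Y δ).Nonempty) →
      Λ.Zraw α X β ∩ Λ.Zraw μ Y ν = ∅) := by
  have hX := mem_Aset_right_of_mk_mem_SSet hs
  have hY := mem_Aset_right_of_mk_mem_SSet ht
  refine ⟨?_, ?_, ?_⟩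
  · rintro δ rfl rfl -
    exact Zraw_inter_Zraw_append hΛ.toIsWLR hX hY
  · rintro δ rfl rfl -
    rw [Set.inter_comm, Set.inter_comm X]
    exact Zraw_inter_Zraw_append hΛ.toIsWLR hY hX
  · intro hn₁ hn₂
    refine Set.eq_empty_of_forall_notMem fun p ⟨h₁, h₂⟩ => ?_
    rcases le_total β.length ν.length with hl | hl
    · exact hn₁ (exists_eq_append_of_mem_Zraw_inter h₁ h₂ hl)
    · obtain ⟨δ, hα, hβ, hne⟩ := exists_eq_append_of_mem_Zraw_inter h₂ h₁ hl
      exact hn₂ ⟨δ, hα, hβ, by rwa [Set.inter_comm]⟩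

end LblSp
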